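/- Let G=(V,E) be a d-manifold and f:V→ℝ injective. Then for every vertex v: if d is even, (i_f(v)+i_{−f}(v))/2 = 1 − χ(M_f(v))/2, and if d is odd, (i_f(v)+i_{−f}(v))/2 = −χ(M_f(v))/2. -/
import Mathlib


open scoped Classical

/-- A finite simple graph: a finite vertex set together with a symmetric, irreflexive
adjacency relation supported on the vertex set. -/
structure FGraph (V : Type) where
  verts : Finset V
  Adj : V → V → Prop
  symm : ∀ {a b}, Adj a b → Adj b a
  loopless : ∀ a, ¬ Adj a a
  mem_of_adj : ∀ {a b}, Adj a b → a ∈ verts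

namespace FGraph

variable {V W : Type}

/-- The subgraph induced on the vertices satisfying `P`. -/
noncomputable def induce (G : FGraph V) (P : V → Prop) : FGraph V where
  verts := G.verts.filter P
  Adj a b := G.Adj a b ∧ P a ∧ P b
  symm h := ⟨G.symm h.1, h.2.2, h.2.1⟩
  loopless a h := G.loopless a h.1
  mem_of_adj h := Finset.mem_filter.mpr ⟨G.mem_of_adj h.1, h.2.1⟩

/-- The unit sphere of a vertex: the subgraph induced on its neighbors. -/
noncomputable def unitSphere (G : FGraph V) (v : V) : FGraph V :=
  G.induce (fun w => G.Adj v w)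

/-- The graph with the vertex `v` (and its edges) removed. -/
noncomputable def erase (G : FGraph V) (v : V) : FGraph V :=
  G.induce (fun w => w ≠ v)

/-- Inductive definition of contractibility: the one-point graph is contractible, and a
graph is contractible if some vertex has a contractible unit sphere and contractible
complement. -/
inductive Contractible : FGraph V → Prop
  | single (G : FGraph V) (v : V) (h : G.verts = {v}) : Contractible G
  | step (G : FGraph V) (v : V) (hv : v ∈ G.verts)
      (h1 : Contractible (G.unitSphere v)) (h2 : Contractible (G.erase v)) :
      Contractible G

mutual
  /-- `G` is a `d`-sphere: the empty graph is the `(-1)`-sphere, and a `d`-manifold is a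
  `d`-sphere if removing some vertex renders it contractible. -/
  inductive IsSphere : ℤ → FGraph V → Prop
    | empty (G : FGraph V) (h : G.verts = ∅) : IsSphere (-1) G
    | punctured (d : ℤ) (G : FGraph V) (hm : IsManifold d G) (v : V) (hv : v ∈ G.verts)
        (hc : Contractible (G.erase v)) : IsSphere d G
  /-- For `d ≥ 0`, `G` is a `d`-manifold iff every unit sphere is a `(d-1)`-sphere. -/
  inductive IsManifold : ℤ → FGraph V → Prop
    | intro (d : ℤ) (hd : 0 ≤ d) (G : FGraph V)
        (h : ∀ v ∈ G.verts, IsSphere (d - 1) (G.unitSphere v)) : IsManifold d G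
end

/-- A simplex of `G`: the vertex set of a complete subgraph. -/
def IsSimplex (G : FGraph V) (x : Finset V) : Prop :=
  x.Nonempty ∧ ↑x ⊆ G.verts ∧ ∀ a ∈ x, ∀ b ∈ x, a ≠ b → G.Adj a b

/-- The Barycentric refinement: vertices are the simplices of `G`, two being adjacent iff
one is strictly contained in the other. -/
noncomputable def barycentric (G : FGraph V) : FGraph (Finset V) where
  verts := G.verts.powerset.filter (fun x => G.IsSimplex x)
  Adj x y := G.IsSimplex x ∧ G.IsSimplex y ∧ (x ⊂ y ∨ y ⊂ x)
  symm h := ⟨h.2.1, h.1, h.2.2.symm⟩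
  loopless x h := by rcases h.2.2 with h' | h' <;> exact (ssubset_irrefl x h')
  mem_of_adj h := Finset.mem_filter.mpr ⟨Finset.mem_powerset.mpr h.1.2.1, h.1⟩

/-- Number of simplices of `G` with exactly `j` vertices (so `numSimplices G (k+1)` is
the `f`-vector entry `f_k(G)`). -/
noncomputable def numSimplices (G : FGraph V) (j : ℕ) : ℕ :=
  (G.verts.powerset.filter (fun x => G.IsSimplex x ∧ x.card = j)).card

/-- Euler characteristic `χ(G) = Σ_{k ≥ 0} (-1)^k f_k(G)`, where `f_k` counts the
simplices with `k+1` vertices. -/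
noncomputable def euler (G : FGraph V) : ℤ :=
  ∑ k ∈ Finset.range G.verts.card, (-1 : ℤ) ^ k * G.numSimplices (k + 1)

/-- The level set `{f = c}`: the subgraph of the Barycentric refinement induced by the
simplices on which `f - c` changes sign. -/
noncomputable def levelSet (G : FGraph V) (f : V → ℝ) (c : ℝ) : FGraph (Finset V) :=
  G.barycentric.induce (fun x => (∃ a ∈ x, f a - c < 0) ∧ (∃ b ∈ x, 0 < f b - c))

/-- Graph isomorphism. -/
def Iso (G : FGraph V) (H : FGraph W) : Prop :=
  ∃ φ : V → W, Set.BijOn φ ↑G.verts ↑H.verts ∧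
    ∀ a ∈ G.verts, ∀ b ∈ G.verts, (G.Adj a b ↔ H.Adj (φ a) (φ b))

/-- Zykov join of two graphs: disjoint union plus all edges between the two parts. -/
noncomputable def join (G : FGraph V) (H : FGraph W) : FGraph (V ⊕ W) where
  verts := G.verts.disjSum H.verts
  Adj a b :=
    match a, b with
    | .inl a, .inl b => G.Adj a b
    | .inr a, .inr b => H.Adj a b
    | .inl a, .inr b => a ∈ G.verts ∧ b ∈ H.verts
    | .inr a, .inl b => b ∈ G.verts ∧ a ∈ H.verts
  symm {a b} h := by
    cases a <;> cases b <;> simp_all <;> first | exact G.symm h | exact H.symm h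
  loopless a h := by
    cases a <;> simp_all <;> first | exact G.loopless _ h | exact H.loopless _ h
  mem_of_adj {a b} h := by
    cases a <;> cases b <;> simp_all [Finset.mem_disjSum] <;>
      first | exact G.mem_of_adj h | exact H.mem_of_adj h

/-- Union of two graphs on the same vertex type. -/
noncomputable def union (G H : FGraph V) : FGraph V where
  verts := G.verts ∪ H.verts
  Adj a b := G.Adj a b ∨ H.Adj a b
  symm h := h.imp G.symm H.symm
  loopless a h := h.elim (G.loopless a) (H.loopless a)
  mem_of_adj h :=
    h.elim (fun h' => Finset.mem_union_left _ (G.mem_of_adj h'))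
      (fun h' => Finset.mem_union_right _ (H.mem_of_adj h'))

/-- A `d`-ball: a graph of the form `S - v` for a `d`-sphere `S` and a vertex `v` of `S`
(up to graph isomorphism). -/
def IsBall (d : ℤ) (H : FGraph W) : Prop :=
  ∃ (S : FGraph ℕ) (v : ℕ), IsSphere d S ∧ v ∈ S.verts ∧ Iso H (S.erase v)

/-- A `d`-manifold with boundary: every unit sphere is a `(d-1)`-sphere or a `(d-1)`-ball. -/
def IsManifoldWithBoundary (d : ℤ) (G : FGraph V) : Prop :=
  ∀ v ∈ G.verts, IsSphere (d - 1) (G.unitSphere v) ∨ IsBall (d - 1) (G.unitSphere v)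

/-- The cyclic graph `C_n` on the vertex set `Fin n`. -/
def cycleGraph (n : ℕ) : FGraph (Fin n) where
  verts := Finset.univ
  Adj a b := a ≠ b ∧ ((a.val + 1) % n = b.val ∨ (b.val + 1) % n = a.val)
  symm h := ⟨h.1.symm, h.2.symm⟩
  loopless a h := h.1 rfl
  mem_of_adj _ := Finset.mem_univ _

/-- `G` is a disjoint union of cyclic graphs `C_n` with `n ≥ 4`: the vertex set splits
into pairwise disjoint pieces, edges never cross between pieces, and each piece induces
a graph isomorphic to a `C_n` with `n ≥ 4`. -/
def IsDisjointUnionOfCycles (G : FGraph V) : Prop :=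
  ∃ P : Finset (Finset V),
    (∀ S ∈ P, ↑S ⊆ G.verts) ∧
    (∀ S ∈ P, ∀ T ∈ P, S ≠ T → Disjoint S T) ∧
    (∀ v ∈ G.verts, ∃ S ∈ P, v ∈ S) ∧
    (∀ a b, G.Adj a b → ∀ S ∈ P, a ∈ S → b ∈ S) ∧
    (∀ S ∈ P, ∃ n, 4 ≤ n ∧ Iso (G.induce (· ∈ S)) (cycleGraph n))

/-- Poincaré–Hopf index `i_f(v) = 1 - χ(S^-_f(v))`. -/
noncomputable def pindex (G : FGraph V) (f : V → ℝ) (v : V) : ℤ :=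
  1 - ((G.unitSphere v).induce (fun w => f w < f v)).euler

/-- Curvature `K(v) = Σ_{k ≥ 0} (-1)^k f_{k-1}(S(v))/(k+1)` with `f_{-1} = 1`. -/
noncomputable def curvature (G : FGraph V) (v : V) : ℝ :=
  ∑ k ∈ Finset.range (G.verts.card + 1),
    (-1 : ℝ) ^ k * (if k = 0 then 1 else ((G.unitSphere v).numSimplices k : ℝ)) / (k + 1)

end FGraph

/-- `sign(a + i b) = sign(a) + i sign(b)`. -/
noncomputable def csgn (z : ℂ) : ℂ :=
  ⟨Real.sign z.re, Real.sign z.im⟩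

/-- The set `U = {1+i, 1-i, -1+i, -1-i}` of possible values of `csgn`. -/
noncomputable def signU : Finset ℂ :=
  {1 + Complex.I, 1 - Complex.I, -1 + Complex.I, -1 - Complex.I}

namespace FGraph

variable {V : Type}

/-- The set of values of `sign(ψ - c)` attained on the finite vertex set `x`. -/
noncomputable def signValues (ψ : V → ℂ) (c : ℂ) (x : Finset V) : Finset ℂ :=
  x.image (fun v => csgn (ψ v - c))

/-- The level set `{ψ = c}` of a complex-valued function: the subgraph of the Barycentric
refinement induced by the simplices on which `sign(ψ - c)` takes at least three distinct
values, including `-1+i` and `1-i`. -/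
noncomputable def complexLevelSet (G : FGraph V) (ψ : V → ℂ) (c : ℂ) : FGraph (Finset V) :=
  G.barycentric.induce (fun x =>
    3 ≤ (signValues ψ c x).card ∧
    (-1 + Complex.I) ∈ signValues ψ c x ∧ (1 - Complex.I) ∈ signValues ψ c x)

/-- The level set `{ψ = 0}_e` for a two-element subset `e ⊆ U`: the subgraph of the
Barycentric refinement induced by the simplices on which `sign(ψ)` attains both values
of `e` and at least three distinct values in total. -/
noncomputable def complexLevelSetE (G : FGraph V) (ψ : V → ℂ) (e : Finset ℂ) :
    FGraph (Finset V) :=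
  G.barycentric.induce (fun x =>
    (∀ u ∈ e, u ∈ signValues ψ 0 x) ∧ 3 ≤ (signValues ψ 0 x).card)

/-- `Ψ^{-1}(t)`: the subgraph of the Barycentric refinement induced by the simplices on
which `sign(ψ)` attains all values of `t`. -/
noncomputable def signPreimage (G : FGraph V) (ψ : V → ℂ) (t : Finset ℂ) :
    FGraph (Finset V) :=
  G.barycentric.induce (fun x => ∀ u ∈ t, u ∈ signValues ψ 0 x)

/-- The sign vectors of `F - c` attained on the finite vertex set `x`. -/
noncomputable def vecSignValues {k : ℕ} (F : V → Fin k → ℝ) (c : Fin k → ℝ)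
    (x : Finset V) : Finset (Fin k → ℝ) :=
  x.image (fun v j => Real.sign (F v j - c j))

/-- The level set `{F = c}` of an `ℝ^k`-valued function: the subgraph of the Barycentric
refinement induced by the simplices on which the sign vector of `F - c` takes at least
`k+1` distinct values, including the `k` vectors `(1,…,1,-1,1,…,1)`. -/
noncomputable def vecLevelSet (G : FGraph V) {k : ℕ} (F : V → Fin k → ℝ) (c : Fin k → ℝ) :
    FGraph (Finset V) :=
  G.barycentric.induce (fun x =>
    k + 1 ≤ (vecSignValues F c x).card ∧
    ∀ j : Fin k, (fun i => if i = j then (-1 : ℝ) else 1) ∈ vecSignValues F c x)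

end FGraph

/-- The complete graph on `Fin n`. -/
def completeFGraph (n : ℕ) : FGraph (Fin n) where
  verts := Finset.univ
  Adj a b := a ≠ b
  symm h := h.symm
  loopless a h := h rfl
  mem_of_adj _ := Finset.mem_univ _

/-- Stirling numbers of the second kind. -/
def stirling2 : ℕ → ℕ → ℕ
  | 0, 0 => 1
  | 0, _ + 1 => 0
  | _ + 1, 0 => 0
  | n + 1, m + 1 => (m + 1) * stirling2 n (m + 1) + stirling2 n m

namespace FGraph

variable {V : Type}

/-- The mixed ("sign change") predicate. -/
def Mx (f : V → ℝ) (c : ℝ) (y : Finset V) : Prop :=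
  (∃ a ∈ y, f a < c) ∧ (∃ b ∈ y, c < f b)

lemma Mx.nonempty {f : V → ℝ} {c : ℝ} {y : Finset V} (h : Mx f c y) : y.Nonempty := by
  obtain ⟨⟨a, ha, -⟩, -⟩ := h; exact ⟨a, ha⟩

/-- The finset of simplices of a graph. -/
noncomputable def simplexSet (G : FGraph V) : Finset (Finset V) :=
  G.verts.powerset.filter (fun x => G.IsSimplex x)

lemma mem_simplexSet {G : FGraph V} {x : Finset V} :
    x ∈ G.simplexSet ↔ G.IsSimplex x := by
  simp only [simplexSet, Finset.mem_filter, Finset.mem_powerset, and_iff_right_iff_imp]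
  exact fun h => Finset.coe_subset.mp h.2.1

lemma euler_eq (G : FGraph V) :
    G.euler = ∑ x ∈ G.simplexSet, (-1 : ℤ) ^ (x.card - 1) := by
  have hmap : ∀ x ∈ G.simplexSet, x.card - 1 ∈ Finset.range G.verts.card := by
    intro x hx
    rw [mem_simplexSet] at hx
    have h1 : 1 ≤ x.card := Finset.card_pos.mpr hx.1
    have h2 : x.card ≤ G.verts.card := Finset.card_le_card (Finset.coe_subset.mp hx.2.1)
    simp only [Finset.mem_range]; omega
  rw [← Finset.sum_fiberwise_of_maps_to hmap, euler]
  refine Finset.sum_congr rfl fun k hk => ?_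
  have hcongr : ∀ x ∈ G.simplexSet.filter (fun x => x.card - 1 = k),
      (-1 : ℤ) ^ (x.card - 1) = (-1) ^ k := by
    intro x hx; rw [(Finset.mem_filter.mp hx).2]
  have hcard : G.simplexSet.filter (fun x => x.card - 1 = k)
      = G.verts.powerset.filter (fun x => G.IsSimplex x ∧ x.card = k + 1) := by
    ext x
    simp only [Finset.mem_filter, Finset.mem_powerset, mem_simplexSet, simplexSet]
    constructor
    · rintro ⟨⟨hsub, hs⟩, hc⟩
      have h1 : 1 ≤ x.card := Finset.card_pos.mpr hs.1
      exact ⟨hsub, hs, by omega⟩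
    · rintro ⟨hsub, hs, hc⟩
      exact ⟨⟨hsub, hs⟩, by omega⟩
  rw [Finset.sum_congr rfl hcongr, Finset.sum_const, nsmul_eq_mul, hcard]
  simp only [numSimplices]
  ring

lemma isSimplex_induce {G : FGraph V} {P : V → Prop} {x : Finset V} :
    (G.induce P).IsSimplex x ↔ G.IsSimplex x ∧ ∀ a ∈ x, P a := by
  constructor
  · rintro ⟨hne, hsub, hadj⟩
    have hP : ∀ a ∈ x, a ∈ G.verts ∧ P a := by
      intro a ha
      have h2 : a ∈ (G.verts.filter P) := Finset.mem_coe.mp (hsub ha)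
      exact Finset.mem_filter.mp h2
    exact ⟨⟨hne, fun a ha => (hP a ha).1, fun a ha b hb hab => (hadj a ha b hb hab).1⟩,
      fun a ha => (hP a ha).2⟩
  · rintro ⟨⟨hne, hsub, hadj⟩, hP⟩
    refine ⟨hne, ?_, fun a ha b hb hab => ⟨hadj a ha b hb hab, hP a ha, hP b hb⟩⟩
    intro a ha
    exact Finset.mem_coe.mpr (Finset.mem_filter.mpr ⟨Finset.mem_coe.mp (hsub ha), hP a ha⟩)

lemma simplexSet_induce (G : FGraph V) (P : V → Prop) :
    (G.induce P).simplexSet = G.simplexSet.filter (fun x => ∀ a ∈ x, P a) := by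
  ext x
  simp only [mem_simplexSet, Finset.mem_filter, isSimplex_induce]

lemma induce_congr (G : FGraph V) {P Q : V → Prop} (h : ∀ a, P a ↔ Q a) :
    G.induce P = G.induce Q := by
  have : P = Q := funext fun a => propext (h a)
  rw [this]

lemma neg_one_pow_pred {n : ℕ} (h : 1 ≤ n) : (-1 : ℤ) ^ n = -(-1 : ℤ) ^ (n - 1) := by
  obtain ⟨m, rfl⟩ : ∃ m, n = m + 1 := ⟨n - 1, by omega⟩
  rw [pow_succ, Nat.add_sub_cancel]
  ring

lemma mem_unitSphere_verts {G : FGraph V} {v a : V} :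
    a ∈ (G.unitSphere v).verts ↔ a ∈ G.verts ∧ G.Adj v a := by
  simp [unitSphere, induce, Finset.mem_filter]

lemma ne_of_mem_unitSphere {G : FGraph V} {v a : V} (h : a ∈ (G.unitSphere v).verts) :
    a ≠ v := by
  intro h'
  exact G.loopless v (h' ▸ (mem_unitSphere_verts.mp h).2)

lemma euler_eq_erase_add (G : FGraph V) {v : V} (hv : v ∈ G.verts) :
    G.euler = (G.erase v).euler + 1 - (G.unitSphere v).euler := by
  rw [euler_eq, euler_eq, euler_eq]
  rw [← Finset.sum_filter_add_sum_filter_not G.simplexSet (fun x => v ∈ x)]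
  have h1 : G.simplexSet.filter (fun x => ¬ v ∈ x) = (G.erase v).simplexSet := by
    rw [show G.erase v = G.induce (fun w => w ≠ v) from rfl, simplexSet_induce]
    ext x
    simp only [Finset.mem_filter]
    constructor
    · rintro ⟨hs, hx⟩; exact ⟨hs, fun a ha h => hx (h ▸ ha)⟩
    · rintro ⟨hs, hx⟩; exact ⟨hs, fun hvx => hx v hvx rfl⟩
  have hvny : ∀ y ∈ (G.unitSphere v).simplexSet, v ∉ y := by
    intro y hy hvy
    exact ne_of_mem_unitSphere ((Finset.mem_powerset.mp (Finset.mem_filter.mp hy).1) hvy) rfl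
  have h2 : G.simplexSet.filter (fun x => v ∈ x)
      = insert {v} ((G.unitSphere v).simplexSet.image (insert v)) := by
    ext x
    simp only [Finset.mem_filter, Finset.mem_insert, Finset.mem_image, mem_simplexSet]
    constructor
    · rintro ⟨hs, hvx⟩
      by_cases hxv : x = {v}
      · exact Or.inl hxv
      · refine Or.inr ⟨x.erase v, ?_, ?_⟩
        · refine ⟨?_, ?_, ?_⟩
          · rw [Finset.nonempty_iff_ne_empty]
            intro hemp
            exact hxv (by
              rcases (Finset.erase_eq_empty_iff x v).mp hemp with h | h
              · exact absurd (h ▸ hvx) (Finset.notMem_empty v)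
              · exact h)
          · intro a ha
            obtain ⟨hav, hax⟩ := Finset.mem_erase.mp ha
            have haG : a ∈ G.verts := hs.2.1 hax
            have hadj : G.Adj v a := hs.2.2 v hvx a hax (Ne.symm hav)
            exact Finset.mem_coe.mpr (Finset.mem_filter.mpr ⟨haG, hadj⟩)
          · intro a ha b hb hab
            obtain ⟨hav, hax⟩ := Finset.mem_erase.mp ha
            obtain ⟨hbv, hbx⟩ := Finset.mem_erase.mp hb
            exact ⟨hs.2.2 a hax b hbx hab, hs.2.2 v hvx a hax (Ne.symm hav),
              hs.2.2 v hvx b hbx (Ne.symm hbv)⟩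
        · exact Finset.insert_erase hvx
    · rintro (rfl | ⟨y, hy, rfl⟩)
      · refine ⟨⟨Finset.singleton_nonempty v, ?_, ?_⟩, Finset.mem_singleton_self v⟩
        · intro a ha
          have ha2 : a = v := by simpa using ha
          exact Finset.mem_coe.mpr (ha2 ▸ hv)
        · intro a ha b hb hab
          simp only [Finset.mem_singleton] at ha hb
          exact absurd (ha.trans hb.symm) hab
      · refine ⟨⟨Finset.insert_nonempty v y, ?_, ?_⟩, Finset.mem_insert_self v y⟩
        · intro a ha
          have ha2 : a = v ∨ a ∈ ↑y := by simpa using ha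
          rcases ha2 with rfl | ha
          · exact Finset.mem_coe.mpr hv
          · exact Finset.mem_coe.mpr (mem_unitSphere_verts.mp
              (Finset.mem_coe.mp (hy.2.1 ha))).1
        · intro a ha b hb hab
          simp only [Finset.mem_insert] at ha hb
          rcases ha with rfl | ha <;> rcases hb with rfl | hb
          · exact absurd rfl hab
          · exact (mem_unitSphere_verts.mp (Finset.mem_coe.mp (hy.2.1 hb))).2
          · exact G.symm (mem_unitSphere_verts.mp (Finset.mem_coe.mp (hy.2.1 ha))).2
          · exact (hy.2.2 a ha b hb hab).1
  have hnotmem : ({v} : Finset V) ∉ (G.unitSphere v).simplexSet.image (insert v) := by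
    intro hmem
    obtain ⟨y, hy, h⟩ := Finset.mem_image.mp hmem
    obtain ⟨a, ha⟩ := (mem_simplexSet.mp hy).1
    have : a ∈ ({v} : Finset V) := h ▸ Finset.mem_insert_of_mem ha
    exact hvny y hy ((Finset.mem_singleton.mp this) ▸ ha)
  rw [h1, h2, Finset.sum_insert hnotmem, Finset.sum_image (by
    intro y hy z hz hyz
    have h1 : y = (insert v y).erase v := (Finset.erase_insert (hvny y hy)).symm
    rw [h1, hyz, Finset.erase_insert (hvny z hz)])]
  have hterm : ∀ y ∈ (G.unitSphere v).simplexSet,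
      (-1 : ℤ) ^ ((insert v y).card - 1) = -(-1 : ℤ) ^ (y.card - 1) := by
    intro y hy
    rw [Finset.card_insert_of_notMem (hvny y hy), Nat.add_sub_cancel]
    exact neg_one_pow_pred (Finset.card_pos.mpr (mem_simplexSet.mp hy).1)
  rw [Finset.sum_congr rfl hterm, Finset.sum_neg_distrib]
  simp only [Finset.card_singleton]
  ring

lemma euler_of_contractible {G : FGraph V} (h : Contractible G) : G.euler = 1 := by
  induction h with
  | single G v hv =>
    rw [euler_eq]
    have hset : G.simplexSet = {{v}} := by
      ext x
      simp only [mem_simplexSet, Finset.mem_singleton]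
      constructor
      · rintro ⟨hne, hsub, -⟩
        have : x ⊆ {v} := by
          intro a ha
          have := hsub ha
          rw [hv] at this
          simpa using this
        rcases Finset.subset_singleton_iff.mp this with rfl | h
        · exact absurd hne (by simp)
        · exact h
      · rintro rfl
        refine ⟨Finset.singleton_nonempty v, ?_, ?_⟩
        · intro a ha
          have ha2 : a = v := by simpa using ha
          exact Finset.mem_coe.mpr (ha2 ▸ (hv ▸ Finset.mem_singleton_self v))
        · intro a ha b hb hab
          simp only [Finset.mem_singleton] at ha hb
          exact absurd (ha.trans hb.symm) hab
    rw [hset]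
    simp
  | step G v hv h1 h2 ih1 ih2 =>
    rw [euler_eq_erase_add G hv, ih1, ih2]
    ring

lemma euler_of_isSphere : ∀ (n : ℕ) (d : ℤ) (H : FGraph V), (d + 1).toNat = n →
    IsSphere d H → H.euler = if Even d then 2 else 0 := by
  intro n
  induction n using Nat.strong_induction_on with
  | _ n ih =>
    intro d H hn hH
    cases hH with
    | empty H h =>
      have hset : H.simplexSet = ∅ := by
        ext x
        simp only [mem_simplexSet, Finset.notMem_empty, iff_false]
        rintro ⟨⟨a, ha⟩, hsub, -⟩
        have := hsub ha
        rw [h] at this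
        simpa using this
      rw [euler_eq, hset]
      simp [Int.even_iff]
    | punctured d H hm v hv hc =>
      obtain ⟨d, hd, H, hsph⟩ := hm
      have hlt : (d - 1 + 1).toNat < n := by omega
      have hrec := ih _ hlt (d - 1) _ rfl (hsph v hv)
      rw [euler_eq_erase_add H hv, euler_of_contractible hc, hrec]
      by_cases hE : Even d
      · rw [if_pos hE, if_neg (by rw [Int.even_sub_one]; exact not_not_intro hE)]
        ring
      · rw [if_neg hE, if_pos (Int.even_sub_one.mpr hE)]
        ring

section Chains

def IsChainSet (C : Finset (Finset V)) : Prop :=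
  ∀ a ∈ C, ∀ b ∈ C, a ≠ b → a ⊂ b ∨ b ⊂ a

noncomputable def chainSum (W : Finset (Finset V)) : ℤ :=
  ∑ C ∈ W.powerset.filter (fun C => C.Nonempty ∧ IsChainSet C), (-1 : ℤ) ^ (C.card - 1)

lemma sup_top_of_chain {C : Finset (Finset V)} (hC : IsChainSet C) (hne : C.Nonempty) :
    C.sup id ∈ C ∧ ∀ y ∈ C, y ⊆ C.sup id := by
  obtain ⟨m, hm, hmax⟩ := Finset.exists_max_image C Finset.card hne
  have htop : ∀ y ∈ C, y ⊆ m := by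
    intro y hy
    by_cases hym : y = m
    · exact hym ▸ subset_rfl
    · rcases hC y hy m hm hym with h | h
      · exact h.subset
      · exact absurd (Finset.card_lt_card h) (not_lt.mpr (hmax y hy))
  have hsup : C.sup id = m :=
    le_antisymm (Finset.sup_le fun y hy => htop y hy) (Finset.le_sup (f := id) hm)
  exact ⟨hsup ▸ hm, fun y hy => hsup ▸ htop y hy⟩

lemma chainSum_aux (W : Finset (Finset V)) :
    ∑ C ∈ W.powerset.filter (fun C => IsChainSet C), (-1 : ℤ) ^ C.card
      = 1 - chainSum W := by
  rw [← Finset.sum_filter_add_sum_filter_not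
    (W.powerset.filter (fun C => IsChainSet C)) (fun C => C.Nonempty)]
  have h1 : (W.powerset.filter (fun C => IsChainSet C)).filter (fun C => ¬ C.Nonempty)
      = {(∅ : Finset (Finset V))} := by
    ext C
    simp only [Finset.mem_filter, Finset.mem_powerset, Finset.mem_singleton,
      Finset.not_nonempty_iff_eq_empty]
    constructor
    · rintro ⟨-, h⟩; exact h
    · rintro rfl
      exact ⟨⟨Finset.empty_subset W, by intro a ha; simp at ha⟩, rfl⟩
  have h2 : (W.powerset.filter (fun C => IsChainSet C)).filter (fun C => C.Nonempty)
      = W.powerset.filter (fun C => C.Nonempty ∧ IsChainSet C) := by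
    rw [Finset.filter_filter]
    apply Finset.filter_congr
    intro C hC
    exact and_comm
  rw [h1, h2]
  have h3 : ∀ C ∈ W.powerset.filter (fun C => C.Nonempty ∧ IsChainSet C),
      (-1 : ℤ) ^ C.card = -(-1 : ℤ) ^ (C.card - 1) := by
    intro C hC
    exact neg_one_pow_pred (Finset.card_pos.mpr (Finset.mem_filter.mp hC).2.1)
  rw [Finset.sum_congr rfl h3, Finset.sum_neg_distrib, Finset.sum_singleton]
  have hfold : ∑ C ∈ W.powerset.filter (fun C => C.Nonempty ∧ IsChainSet C),
      (-1 : ℤ) ^ (C.card - 1) = chainSum W := rfl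
  rw [hfold, Finset.card_empty, pow_zero]
  ring

lemma chainSum_rec (W : Finset (Finset V)) :
    chainSum W = ∑ x ∈ W, (1 - chainSum (W.filter (fun y => y ⊂ x))) := by
  have hmap : ∀ C ∈ W.powerset.filter (fun C => C.Nonempty ∧ IsChainSet C), C.sup id ∈ W := by
    intro C hC
    obtain ⟨hCW, hne, hch⟩ := Finset.mem_filter.mp hC
    exact Finset.mem_powerset.mp hCW (sup_top_of_chain hch hne).1
  have h0 : chainSum W = ∑ x ∈ W, ∑ C ∈ (W.powerset.filter
      (fun C => C.Nonempty ∧ IsChainSet C)).filter (fun C => C.sup id = x),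
      (-1 : ℤ) ^ (C.card - 1) :=
    (Finset.sum_fiberwise_of_maps_to hmap _).symm
  rw [h0]
  refine Finset.sum_congr rfl fun x hx => ?_
  rw [← chainSum_aux (W.filter (fun y => y ⊂ x))]
  refine Finset.sum_nbij' (i := fun C => C.erase x) (j := fun C => insert x C) ?_ ?_ ?_ ?_ ?_
  · -- maps to
    intro C hC
    obtain ⟨hC1, hsup⟩ := Finset.mem_filter.mp hC
    obtain ⟨hCW, hne, hch⟩ := Finset.mem_filter.mp hC1
    obtain ⟨hmem, htop⟩ := sup_top_of_chain hch hne
    rw [hsup] at hmem htop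
    simp only [Finset.mem_filter, Finset.mem_powerset]
    refine ⟨?_, ?_⟩
    · intro y hy
      obtain ⟨hyx, hyC⟩ := Finset.mem_erase.mp hy
      exact Finset.mem_filter.mpr ⟨Finset.mem_powerset.mp hCW hyC,
        HasSubset.Subset.ssubset_of_ne (htop y hyC) hyx⟩
    · intro a ha b hb hab
      exact hch a (Finset.mem_of_mem_erase ha) b (Finset.mem_of_mem_erase hb) hab
  · -- inverse maps to
    intro C hC
    obtain ⟨hCW, hch⟩ := Finset.mem_filter.mp hC
    have hsubW : C ⊆ W.filter (fun y => y ⊂ x) := Finset.mem_powerset.mp hCW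
    have hxC : x ∉ C := by
      intro h
      exact ssubset_irrefl x (Finset.mem_filter.mp (hsubW h)).2
    have hchins : IsChainSet (insert x C) := by
      intro a ha b hb hab
      simp only [Finset.mem_insert] at ha hb
      rcases ha with rfl | ha <;> rcases hb with rfl | hb
      · exact absurd rfl hab
      · exact Or.inr (Finset.mem_filter.mp (hsubW hb)).2
      · exact Or.inl (Finset.mem_filter.mp (hsubW ha)).2
      · exact hch a ha b hb hab
    have hsup : (insert x C).sup id = x := by
      apply le_antisymm
      · apply Finset.sup_le
        intro y hy
        rcases Finset.mem_insert.mp hy with rfl | hy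
        · exact le_refl _
        · exact le_of_lt (Finset.mem_filter.mp (hsubW hy)).2
      · exact Finset.le_sup (f := id) (Finset.mem_insert_self x C)
    refine Finset.mem_filter.mpr ⟨Finset.mem_filter.mpr ⟨?_, ?_, hchins⟩, hsup⟩
    · rw [Finset.mem_powerset]
      intro y hy
      rcases Finset.mem_insert.mp hy with rfl | hy
      · exact hx
      · exact (Finset.mem_filter.mp (hsubW hy)).1
    · exact Finset.insert_nonempty x C
  · -- left inverse
    intro C hC
    obtain ⟨hC1, hsup⟩ := Finset.mem_filter.mp hC
    obtain ⟨hCW, hne, hch⟩ := Finset.mem_filter.mp hC1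
    have hmem := (sup_top_of_chain hch hne).1
    rw [hsup] at hmem
    exact Finset.insert_erase hmem
  · -- right inverse
    intro C hC
    obtain ⟨hCW, hch⟩ := Finset.mem_filter.mp hC
    have hsubW : C ⊆ W.filter (fun y => y ⊂ x) := Finset.mem_powerset.mp hCW
    have hxC : x ∉ C := by
      intro h
      exact ssubset_irrefl x (Finset.mem_filter.mp (hsubW h)).2
    exact Finset.erase_insert hxC
  · -- values
    intro C hC
    obtain ⟨hC1, hsup⟩ := Finset.mem_filter.mp hC
    obtain ⟨hCW, hne, hch⟩ := Finset.mem_filter.mp hC1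
    have hmem := (sup_top_of_chain hch hne).1
    rw [hsup] at hmem
    rw [Finset.card_erase_of_mem hmem]

lemma sum_mixed_subsets (f : V → ℝ) (c : ℝ) (x : Finset V)
    (hm : Mx f c x) (hz : ∀ a ∈ x, f a ≠ c) :
    ∑ y ∈ x.powerset.filter (fun y => Mx f c y), (-1 : ℤ) ^ y.card = 1 := by
  classical
  set A := x.filter (fun a => f a < c) with hA
  set B := x.filter (fun a => c < f a) with hB
  have hAne : A.Nonempty := by
    obtain ⟨⟨a, ha, hlt⟩, -⟩ := hm
    exact ⟨a, Finset.mem_filter.mpr ⟨ha, hlt⟩⟩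
  have hBne : B.Nonempty := by
    obtain ⟨-, ⟨b, hb, hlt⟩⟩ := hm
    exact ⟨b, Finset.mem_filter.mpr ⟨hb, hlt⟩⟩
  have hset : x.powerset.filter (fun y => Mx f c y)
      = x.powerset \ (A.powerset ∪ B.powerset) := by
    ext y
    simp only [Finset.mem_filter, Finset.mem_sdiff, Finset.mem_union, Finset.mem_powerset]
    constructor
    · rintro ⟨hyx, ⟨a, ha, hlt⟩, ⟨b, hb, hlt'⟩⟩
      refine ⟨hyx, ?_⟩
      rintro (h | h)
      · have := Finset.mem_filter.mp (h hb)
        exact absurd this.2 (not_lt.mpr (le_of_lt hlt'))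
      · have := Finset.mem_filter.mp (h ha)
        exact absurd this.2 (not_lt.mpr (le_of_lt hlt))
    · rintro ⟨hyx, h⟩
      push_neg at h
      obtain ⟨hA', hB'⟩ := h
      refine ⟨hyx, ?_, ?_⟩
      · obtain ⟨b, hb, hbB⟩ := Finset.not_subset.mp hB'
        refine ⟨b, hb, ?_⟩
        have hbx := hyx hb
        rcases lt_trichotomy (f b) c with h | h | h
        · exact h
        · exact absurd h (hz b hbx)
        · exact absurd (Finset.mem_filter.mpr ⟨hbx, h⟩) hbB
      · obtain ⟨a, ha, haA⟩ := Finset.not_subset.mp hA'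
        refine ⟨a, ha, ?_⟩
        have hax := hyx ha
        rcases lt_trichotomy (f a) c with h | h | h
        · exact absurd (Finset.mem_filter.mpr ⟨hax, h⟩) haA
        · exact absurd h (hz a hax)
        · exact h
  have hsub : A.powerset ∪ B.powerset ⊆ x.powerset := by
    intro y hy
    rcases Finset.mem_union.mp hy with h | h
    · exact Finset.mem_powerset.mpr ((Finset.mem_powerset.mp h).trans (Finset.filter_subset _ _))
    · exact Finset.mem_powerset.mpr ((Finset.mem_powerset.mp h).trans (Finset.filter_subset _ _))
  have hinter : A.powerset ∩ B.powerset = {(∅ : Finset V)} := by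
    ext y
    simp only [Finset.mem_inter, Finset.mem_powerset, Finset.mem_singleton]
    constructor
    · rintro ⟨h1, h2⟩
      rw [Finset.eq_empty_iff_forall_notMem]
      intro a ha
      have ha1 := Finset.mem_filter.mp (h1 ha)
      have ha2 := Finset.mem_filter.mp (h2 ha)
      exact absurd ha2.2 (not_lt.mpr (le_of_lt ha1.2))
    · rintro rfl
      exact ⟨Finset.empty_subset _, Finset.empty_subset _⟩
  rw [hset, Finset.sum_sdiff_eq_sub hsub]
  have hu : ∑ y ∈ A.powerset ∪ B.powerset, (-1 : ℤ) ^ y.card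
      = ∑ y ∈ A.powerset, (-1 : ℤ) ^ y.card + ∑ y ∈ B.powerset, (-1 : ℤ) ^ y.card
        - ∑ y ∈ A.powerset ∩ B.powerset, (-1 : ℤ) ^ y.card := by
    have := Finset.sum_union_inter (s₁ := A.powerset) (s₂ := B.powerset)
      (f := fun y => (-1 : ℤ) ^ y.card)
    linarith
  rw [hu, hinter, Finset.sum_singleton,
    Finset.sum_powerset_neg_one_pow_card_of_nonempty hAne,
    Finset.sum_powerset_neg_one_pow_card_of_nonempty hBne,
    Finset.sum_powerset_neg_one_pow_card_of_nonempty hm.nonempty]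
  simp

lemma chainSum_mixed (f : V → ℝ) (c : ℝ) :
    ∀ x : Finset V, Mx f c x → (∀ a ∈ x, f a ≠ c) →
      chainSum (x.powerset.filter (fun y => y ≠ x ∧ Mx f c y)) = 1 - (-1 : ℤ) ^ x.card := by
  intro x
  induction x using Finset.strongInductionOn with
  | _ x ih =>
    intro hm hz
    rw [chainSum_rec]
    have hstep : ∀ y ∈ x.powerset.filter (fun y => y ≠ x ∧ Mx f c y),
        (1 : ℤ) - chainSum ((x.powerset.filter (fun y' => y' ≠ x ∧ Mx f c y')).filter
            (fun z => z ⊂ y)) = (-1 : ℤ) ^ y.card := by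
      intro y hy
      have hmem := Finset.mem_filter.mp hy
      have hyx : y ⊆ x := Finset.mem_powerset.mp hmem.1
      have hyne : y ≠ x := hmem.2.1
      have hym : Mx f c y := hmem.2.2
      have hyss : y ⊂ x := HasSubset.Subset.ssubset_of_ne hyx hyne
      have hfil : (x.powerset.filter (fun y' => y' ≠ x ∧ Mx f c y')).filter (fun z => z ⊂ y)
          = y.powerset.filter (fun z => z ≠ y ∧ Mx f c z) := by
        ext z
        simp only [Finset.mem_filter, Finset.mem_powerset]
        constructor
        · rintro ⟨⟨-, -, hzm⟩, hzy⟩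
          exact ⟨hzy.subset, hzy.ne, hzm⟩
        · rintro ⟨hzy, hzne, hzm⟩
          have hzss : z ⊂ y := HasSubset.Subset.ssubset_of_ne hzy hzne
          exact ⟨⟨hzss.subset.trans hyss.subset, (hzss.trans hyss).ne, hzm⟩, hzss⟩
      rw [hfil, ih y hyss hym (fun a ha => hz a (hyss.subset ha))]
      ring
    rw [Finset.sum_congr rfl hstep]
    have hins : x.powerset.filter (fun y => Mx f c y)
        = insert x (x.powerset.filter (fun y => y ≠ x ∧ Mx f c y)) := by
      ext y
      simp only [Finset.mem_filter, Finset.mem_insert, Finset.mem_powerset]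
      constructor
      · rintro ⟨hyx, hym⟩
        by_cases h : y = x
        · exact Or.inl h
        · exact Or.inr ⟨hyx, h, hym⟩
      · rintro (rfl | ⟨hyx, -, hym⟩)
        · exact ⟨subset_rfl, hm⟩
        · exact ⟨hyx, hym⟩
    have hnm : x ∉ x.powerset.filter (fun y => y ≠ x ∧ Mx f c y) := by
      simp only [Finset.mem_filter]
      rintro ⟨-, h, -⟩
      exact h rfl
    have := sum_mixed_subsets f c x hm hz
    rw [hins, Finset.sum_insert hnm] at this
    linarith

end Chains

lemma isSimplex_barycentric {S : FGraph V} {C : Finset (Finset V)} :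
    (S.barycentric).IsSimplex C ↔ C.Nonempty ∧ (∀ y ∈ C, S.IsSimplex y) ∧ IsChainSet C := by
  constructor
  · rintro ⟨hne, hsub, hadj⟩
    refine ⟨hne, ?_, ?_⟩
    · intro y hy
      exact (Finset.mem_filter.mp (Finset.mem_coe.mp (hsub hy))).2
    · intro a ha b hb hab
      exact (hadj a ha b hb hab).2.2
  · rintro ⟨hne, hsimp, hchain⟩
    refine ⟨hne, ?_, fun a ha b hb hab => ⟨hsimp a ha, hsimp b hb, hchain a ha b hb hab⟩⟩
    intro y hy
    exact Finset.mem_coe.mpr (Finset.mem_filter.mpr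
      ⟨Finset.mem_powerset.mpr (Finset.coe_subset.mp (hsimp y hy).2.1), hsimp y hy⟩)

lemma simplexSet_levelSet (S : FGraph V) (f : V → ℝ) (c : ℝ) :
    (S.levelSet f c).simplexSet
      = (S.simplexSet.filter (fun x => Mx f c x)).powerset.filter
          (fun C => C.Nonempty ∧ IsChainSet C) := by
  ext C
  simp only [mem_simplexSet, Finset.mem_filter, Finset.mem_powerset, levelSet,
    isSimplex_induce, isSimplex_barycentric]
  constructor
  · rintro ⟨⟨hne, hsimp, hchain⟩, hP⟩
    refine ⟨?_, hne, hchain⟩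
    intro y hy
    refine Finset.mem_filter.mpr ⟨mem_simplexSet.mpr (hsimp y hy), ?_⟩
    obtain ⟨⟨a, ha, ha'⟩, ⟨b, hb, hb'⟩⟩ := hP y hy
    exact ⟨⟨a, ha, by linarith [sub_neg.mp ha']⟩, ⟨b, hb, by linarith [sub_pos.mp hb']⟩⟩
  · rintro ⟨hsub, hne, hchain⟩
    have hmem : ∀ y ∈ C, S.IsSimplex y ∧ Mx f c y := by
      intro y hy
      have := Finset.mem_filter.mp (hsub hy)
      exact ⟨mem_simplexSet.mp this.1, this.2⟩
    refine ⟨⟨hne, fun y hy => (hmem y hy).1, hchain⟩, ?_⟩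
    intro y hy
    obtain ⟨⟨a, ha, ha'⟩, ⟨b, hb, hb'⟩⟩ := (hmem y hy).2
    exact ⟨⟨a, ha, by linarith⟩, ⟨b, hb, by linarith⟩⟩

lemma euler_levelSet (S : FGraph V) (f : V → ℝ) (c : ℝ) (hz : ∀ a ∈ S.verts, f a ≠ c) :
    (S.levelSet f c).euler
      = - ∑ x ∈ S.simplexSet.filter (fun x => Mx f c x), (-1 : ℤ) ^ (x.card - 1) := by
  rw [euler_eq, simplexSet_levelSet]
  have hlhs : ∑ C ∈ (S.simplexSet.filter (fun x => Mx f c x)).powerset.filter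
        (fun C => C.Nonempty ∧ IsChainSet C), (-1 : ℤ) ^ (C.card - 1)
      = chainSum (S.simplexSet.filter (fun x => Mx f c x)) := rfl
  rw [hlhs, chainSum_rec]
  have hstep : ∀ x ∈ S.simplexSet.filter (fun x => Mx f c x),
      (1 : ℤ) - chainSum ((S.simplexSet.filter (fun x => Mx f c x)).filter
          (fun y => y ⊂ x)) = (-1 : ℤ) ^ x.card := by
    intro x hx
    obtain ⟨hxs, hxm⟩ := Finset.mem_filter.mp hx
    have hxsimp := mem_simplexSet.mp hxs
    have hfil : (S.simplexSet.filter (fun x => Mx f c x)).filter (fun y => y ⊂ x)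
        = x.powerset.filter (fun y => y ≠ x ∧ Mx f c y) := by
      ext z
      simp only [Finset.mem_filter, Finset.mem_powerset, mem_simplexSet]
      constructor
      · rintro ⟨⟨-, hzm⟩, hzx⟩
        exact ⟨hzx.subset, hzx.ne, hzm⟩
      · rintro ⟨hzx, hzne, hzm⟩
        have hzss : z ⊂ x := HasSubset.Subset.ssubset_of_ne hzx hzne
        refine ⟨⟨?_, hzm⟩, hzss⟩
        exact ⟨hzm.nonempty, (Finset.coe_subset.mpr hzx).trans hxsimp.2.1,
          fun a ha b hb hab => hxsimp.2.2 a (hzx ha) b (hzx hb) hab⟩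
    rw [hfil, chainSum_mixed f c x hxm
      (fun a ha => hz a (Finset.coe_subset.mp hxsimp.2.1 ha))]
    ring
  rw [Finset.sum_congr rfl hstep, ← Finset.sum_neg_distrib]
  refine Finset.sum_congr rfl fun x hx => ?_
  obtain ⟨hxs, hxm⟩ := Finset.mem_filter.mp hx
  rw [neg_one_pow_pred (Finset.card_pos.mpr hxm.nonempty)]

lemma euler_split (S : FGraph V) (f : V → ℝ) (c : ℝ) (hz : ∀ a ∈ S.verts, f a ≠ c) :
    S.euler = (S.induce (fun w => f w < c)).euler + (S.induce (fun w => c < f w)).euler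
      + ∑ x ∈ S.simplexSet.filter (fun x => Mx f c x), (-1 : ℤ) ^ (x.card - 1) := by
  rw [euler_eq, euler_eq, euler_eq, simplexSet_induce, simplexSet_induce]
  rw [← Finset.sum_filter_add_sum_filter_not S.simplexSet (fun x => Mx f c x)]
  have hun : S.simplexSet.filter (fun x => ¬ Mx f c x)
      = S.simplexSet.filter (fun x => ∀ a ∈ x, f a < c)
        ∪ S.simplexSet.filter (fun x => ∀ a ∈ x, c < f a) := by
    ext x
    simp only [Finset.mem_filter, Finset.mem_union, mem_simplexSet]
    constructor
    · rintro ⟨hs, hnm⟩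
      have hzx : ∀ a ∈ x, f a ≠ c := fun a ha => hz a (Finset.coe_subset.mp hs.2.1 ha)
      rw [Mx, not_and_or] at hnm
      rcases hnm with h | h
      · push_neg at h
        right
        refine ⟨hs, fun a ha => ?_⟩
        rcases lt_trichotomy (f a) c with h' | h' | h'
        · exact absurd h' (not_lt.mpr (h a ha))
        · exact absurd h' (hzx a ha)
        · exact h'
      · push_neg at h
        left
        refine ⟨hs, fun a ha => ?_⟩
        rcases lt_trichotomy (f a) c with h' | h' | h'
        · exact h'
        · exact absurd h' (hzx a ha)
        · exact absurd h' (not_lt.mpr (h a ha))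
    · rintro (⟨hs, h⟩ | ⟨hs, h⟩)
      · refine ⟨hs, ?_⟩
        rintro ⟨-, ⟨b, hb, hb'⟩⟩
        exact absurd (h b hb) (not_lt.mpr (le_of_lt hb'))
      · refine ⟨hs, ?_⟩
        rintro ⟨⟨a, ha, ha'⟩, -⟩
        exact absurd (h a ha) (not_lt.mpr (le_of_lt ha'))
  have hdisj : Disjoint (S.simplexSet.filter (fun x => ∀ a ∈ x, f a < c))
      (S.simplexSet.filter (fun x => ∀ a ∈ x, c < f a)) := by
    rw [Finset.disjoint_left]
    intro x hx1 hx2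
    obtain ⟨hs1, h1⟩ := Finset.mem_filter.mp hx1
    obtain ⟨-, h2⟩ := Finset.mem_filter.mp hx2
    obtain ⟨a, ha⟩ := (mem_simplexSet.mp hs1).1
    exact absurd (h2 a ha) (not_lt.mpr (le_of_lt (h1 a ha)))
  rw [hun, Finset.sum_union hdisj]
  ring

end FGraph


/-- For a `d`-manifold `G` and an injective `f : V → ℝ`, the symmetric
Poincaré–Hopf index satisfies, at every vertex `v`,
`(i_f(v) + i_{-f}(v))/2 = 1 - χ(M_f(v))/2` when `d` is even and
`(i_f(v) + i_{-f}(v))/2 = -χ(M_f(v))/2` when `d` is odd. -/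
theorem symmetric_index_formula {V : Type} (G : FGraph V) (d : ℤ)
    (hG : FGraph.IsManifold d G) (f : V → ℝ) (hf : Set.InjOn f ↑G.verts) :
    ∀ v ∈ G.verts,
      (Even d →
        ((G.pindex f v + G.pindex (fun w => -f w) v : ℤ) : ℝ) / 2 =
          1 - (((G.unitSphere v).levelSet f (f v)).euler : ℝ) / 2) ∧
      (Odd d →
        ((G.pindex f v + G.pindex (fun w => -f w) v : ℤ) : ℝ) / 2 =
          -(((G.unitSphere v).levelSet f (f v)).euler : ℝ) / 2) := by
  intro v hv
  have hsph : FGraph.IsSphere (d - 1) (G.unitSphere v) := by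
    cases hG with
    | intro d hd G h => exact h v hv
  have hz : ∀ a ∈ (G.unitSphere v).verts, f a ≠ f v := by
    intro a ha hfa
    have h1 := FGraph.mem_unitSphere_verts.mp ha
    exact FGraph.ne_of_mem_unitSphere ha (hf h1.1 hv hfa)
  have eS := FGraph.euler_of_isSphere (d - 1 + 1).toNat (d - 1) (G.unitSphere v) rfl hsph
  have hsplit := FGraph.euler_split (G.unitSphere v) f (f v) hz
  have hlvl := FGraph.euler_levelSet (G.unitSphere v) f (f v) hz
  have hp1 : G.pindex f v = 1 - ((G.unitSphere v).induce (fun w => f w < f v)).euler := rfl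
  have hp2 : G.pindex (fun w => -f w) v
      = 1 - ((G.unitSphere v).induce (fun w => f v < f w)).euler := by
    show 1 - ((G.unitSphere v).induce (fun w => -f w < -f v)).euler = _
    rw [FGraph.induce_congr _ (fun a => neg_lt_neg_iff)]
  constructor <;> intro hpar
  · have hS0 : (G.unitSphere v).euler = 0 := by
      rw [eS, if_neg]
      rw [Int.even_sub_one]
      exact not_not_intro hpar
    rw [hp1, hp2]
    rw [hS0] at hsplit
    have key : (1 - ((G.unitSphere v).induce (fun w => f w < f v)).euler)
        + (1 - ((G.unitSphere v).induce (fun w => f v < f w)).euler)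
        = 2 - ((G.unitSphere v).levelSet f (f v)).euler := by linarith [hsplit, hlvl]
    rw [key]
    push_cast
    ring
  · have hS2 : (G.unitSphere v).euler = 2 := by
      rw [eS, if_pos]
      exact Int.even_sub_one.mpr (Int.not_even_iff_odd.mpr hpar)
    rw [hp1, hp2]
    rw [hS2] at hsplit
    have key : (1 - ((G.unitSphere v).induce (fun w => f w < f v)).euler)
        + (1 - ((G.unitSphere v).induce (fun w => f v < f w)).euler)
        = -((G.unitSphere v).levelSet f (f v)).euler := by linarith [hsplit, hlvl]
    rw [key]
    push_cast
    ring
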